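/- arXiv:1805.05015 — 2 statements merged into one kernel-verified Lean document; each statement's English description precedes it below -/
import Mathlib

section
/- Let q ≥ 2, χ* a Dirichlet character mod d with d | q. All zeros of F(s) = ∏_{p|q}(1 - χ*(p)p^{-s}) other than possibly s = 0 are simple. -/
/-!
Each Euler factor `1 - χ(p) p^{-z}` has derivative `log p ≠ 0` at its zeros, so its zeros are
simple. At a zero `s`, `p^{-s} = χ(p)⁻¹` is a root of unity, so `s log p ∈ 2πiℚ`; for `s ≠ 0`
this cannot hold for two distinct primes, because `log p / log r` is irrational by unique
factorization. So exactly one factor vanishes at `s`, and the analytic orders add up to `1`.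
-/

open Complex Finset Real

theorem IsOfFinOrder.of_mul_eq_one {M : Type*} [CommMonoid M] {a b : M} (ha : IsOfFinOrder a)
    (hab : a * b = 1) : IsOfFinOrder b := by
  obtain ⟨n, hn, han⟩ := isOfFinOrder_iff_pow_eq_one.mp ha
  refine isOfFinOrder_iff_pow_eq_one.mpr ⟨n, hn, ?_⟩
  simpa [mul_pow, han] using congrArg (· ^ n) hab

theorem MulChar.isOfFinOrder_apply {M R : Type*} [CommMonoid M] [CommMonoidWithZero R] [Finite Mˣ]
    (χ : MulChar M R) {a : M} (ha : χ a ≠ 0) : IsOfFinOrder (χ a) := by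
  have hu : IsUnit a := not_not.mp fun h => ha (χ.map_nonunit h)
  rw [← hu.unit_spec]
  exact ((χ : M →* R).comp (Units.coeHom M)).isOfFinOrder (isOfFinOrder_of_finite hu.unit)

theorem Nat.Prime.eq_of_intCast_mul_log_eq {p r : ℕ} (hp : p.Prime) (hr : r.Prime) {a b : ℤ}
    (ha : a ≠ 0) (h : a * Real.log p = b * Real.log r) : p = r := by
  have habs : Real.log ((p : ℝ) ^ a.natAbs) = Real.log ((r : ℝ) ^ b.natAbs) := by
    rw [Real.log_pow, Real.log_pow, Nat.cast_natAbs, Nat.cast_natAbs, Int.cast_abs, Int.cast_abs,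
      ← abs_of_nonneg (Real.log_natCast_nonneg p), ← abs_of_nonneg (Real.log_natCast_nonneg r),
      ← abs_mul, ← abs_mul, h]
  have hpow : p ^ a.natAbs = r ^ b.natAbs := by
    exact_mod_cast Real.log_injOn_pos (by simp [hp.pos]) (by simp [hr.pos]) habs
  have hdvd : p ∣ r ^ b.natAbs := hpow ▸ dvd_pow_self p (Int.natAbs_ne_zero.mpr ha)
  exact (Nat.prime_dvd_prime_iff_eq hp hr).mp (hp.dvd_of_dvd_pow hdvd)

theorem exists_mul_log_mul_eq_of_isOfFinOrder_natCast_cpow {x : ℕ} (hx : x ≠ 0) {s : ℂ}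
    (h : IsOfFinOrder ((x : ℂ) ^ s)) :
    ∃ n : ℕ, n ≠ 0 ∧ ∃ k : ℤ, n * Real.log x * s = k * (2 * π * I) := by
  obtain ⟨n, hn, hxn⟩ := isOfFinOrder_iff_pow_eq_one.mp h
  rw [← cpow_nat_mul, cpow_def_of_ne_zero (Nat.cast_ne_zero.mpr hx)] at hxn
  obtain ⟨k, hk⟩ := exp_eq_one_iff.mp hxn
  exact ⟨n, hn.ne', k, by rw [← hk, ← natCast_log]; ring⟩

theorem Nat.Prime.eq_of_isOfFinOrder_cpow {p r : ℕ} (hp : p.Prime) (hr : r.Prime) {s : ℂ}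
    (hs : s ≠ 0) (hps : IsOfFinOrder ((p : ℂ) ^ s)) (hrs : IsOfFinOrder ((r : ℂ) ^ s)) : p = r := by
  obtain ⟨n, hn, k, hk⟩ := exists_mul_log_mul_eq_of_isOfFinOrder_natCast_cpow hp.ne_zero hps
  obtain ⟨m, hm, j, hj⟩ := exists_mul_log_mul_eq_of_isOfFinOrder_natCast_cpow hr.ne_zero hrs
  have hlog : Real.log r ≠ 0 := (Real.log_pos (by exact_mod_cast hr.one_lt)).ne'
  have hj0 : j ≠ 0 := by
    rintro rfl
    rw [Int.cast_zero, zero_mul] at hj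
    obtain h | h := _root_.mul_eq_zero.mp hj
    · exact mul_ne_zero (Nat.cast_ne_zero.mpr hm) (ofReal_ne_zero.mpr hlog) h
    · exact hs h
  -- eliminating `s` between `hk` and `hj`
  refine hp.eq_of_intCast_mul_log_eq hr (a := j * n) (b := k * m) (by simp [hn, hj0]) ?_
  have hT : (2 * π * I : ℂ) ≠ 0 := by simp [pi_ne_zero, I_ne_zero]
  apply ofReal_injective
  apply mul_right_cancel₀ hT
  simp only [ofReal_mul, ofReal_intCast, Int.cast_mul, Int.cast_natCast, ofReal_natCast]
  linear_combination (m * Real.log r : ℂ) * hk - (n * Real.log p : ℂ) * hj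

theorem analyticOrderAt_fun_finset_prod {𝕜 ι : Type*} [NontriviallyNormedField 𝕜] {S : Finset ι}
    {f : ι → 𝕜 → 𝕜} {z₀ : 𝕜} (hf : ∀ i ∈ S, AnalyticAt 𝕜 (f i) z₀) :
    analyticOrderAt (fun z => ∏ i ∈ S, f i z) z₀ = ∑ i ∈ S, analyticOrderAt (f i) z₀ := by
  classical
  induction S using Finset.induction_on with
  | empty => simp [analyticOrderAt_eq_zero]
  | insert a S ha ih =>
    simp_rw [prod_insert ha, sum_insert ha]
    rw [← ih fun i hi => hf i (mem_insert_of_mem hi)]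
    exact analyticOrderAt_mul (hf a (mem_insert_self a S))
      (S.analyticAt_fun_prod fun i hi => hf i (mem_insert_of_mem hi))

theorem analyticAt_one_sub_mul_cpow_neg {x : ℂ} (hx : x ≠ 0) (c s : ℂ) :
    AnalyticAt ℂ (fun z => 1 - c * x ^ (-z)) s := by
  simp_rw [cpow_def_of_ne_zero hx]
  fun_prop

theorem analyticOrderAt_one_sub_mul_cpow_neg {c x s : ℂ} (hx : x ≠ 0) (hx1 : x ≠ 1)
    (hs : c * x ^ (-s) = 1) : analyticOrderAt (fun z => 1 - c * x ^ (-z)) s = 1 := by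
  have hderiv : HasDerivAt (fun z => 1 - c * x ^ (-z)) (log x) s := by
    refine ((((hasDerivAt_id s).neg.const_cpow (Or.inl hx)).const_mul c).const_sub 1).congr_deriv ?_
    simp only [Pi.neg_apply, id_eq]
    linear_combination log x * hs
  refine (analyticAt_one_sub_mul_cpow_neg hx c s).analyticOrderAt_eq_one_of_zero_deriv_ne_zero
    (by simp [hs]) ?_
  rw [hderiv.deriv]
  exact fun h => hx1 (by rw [← exp_log hx, h, Complex.exp_zero])

theorem finite_euler_product_nonzero_zeros_simple_general (q d : ℕ)
    (χ : DirichletCharacter ℂ d) (s₀ : ℂ) (hs₀ : s₀ ≠ 0)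
    (hzero : ∏ p ∈ q.primeFactors, (1 - χ (p : ZMod d) * (p : ℂ) ^ (-s₀)) = 0) :
    analyticOrderAt (fun z : ℂ => ∏ p ∈ q.primeFactors, (1 - χ (p : ZMod d) * (p : ℂ) ^ (-z))) s₀ = 1 := by
  have hroot : ∀ p ∈ q.primeFactors, 1 - χ (p : ZMod d) * (p : ℂ) ^ (-s₀) = 0 →
      IsOfFinOrder ((p : ℂ) ^ (-s₀)) := fun p _ hp =>
    have h := (sub_eq_zero.mp hp).symm
    (χ.isOfFinOrder_apply (left_ne_zero_of_mul_eq_one h)).of_mul_eq_one h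
  obtain ⟨p₀, hp₀, hzero₀⟩ := prod_eq_zero_iff.mp hzero
  have hprime : ∀ p ∈ q.primeFactors, p.Prime := fun p hp => Nat.prime_of_mem_primeFactors hp
  have hbase : ∀ p ∈ q.primeFactors, (p : ℂ) ≠ 0 := fun p hp => by
    exact_mod_cast (hprime p hp).ne_zero
  rw [analyticOrderAt_fun_finset_prod fun p hp => analyticAt_one_sub_mul_cpow_neg (hbase p hp) _ _,
    sum_eq_single p₀]
  · exact analyticOrderAt_one_sub_mul_cpow_neg (hbase p₀ hp₀)
      (by exact_mod_cast (hprime p₀ hp₀).ne_one) (sub_eq_zero.mp hzero₀).symm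
  · refine fun p hp hne => analyticOrderAt_eq_zero.mpr (Or.inr fun hp₀' => hne ?_)
    exact (hprime p hp).eq_of_isOfFinOrder_cpow (hprime p₀ hp₀) (neg_ne_zero.mpr hs₀)
      (hroot p hp hp₀') (hroot p₀ hp₀ hzero₀)
  · exact fun h => absurd hp₀ h

/-- Every zero of `F(s) = ∏_{p ∣ q}(1 - χ*(p) p^{-s})` other than possibly `s = 0` is simple. -/
theorem finite_euler_product_nonzero_zeros_simple (q d : ℕ) (hq : 2 ≤ q) (hdq : d ∣ q)
    (χ : DirichletCharacter ℂ d) (s₀ : ℂ) (hs₀ : s₀ ≠ 0)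
    (hzero : ∏ p ∈ q.primeFactors, (1 - χ (p : ZMod d) * (p : ℂ) ^ (-s₀)) = 0)
    (hF : AnalyticAt ℂ
      (fun z : ℂ => ∏ p ∈ q.primeFactors, (1 - χ (p : ZMod d) * (p : ℂ) ^ (-z))) s₀) :
    analyticOrderAt (fun z : ℂ => ∏ p ∈ q.primeFactors, (1 - χ (p : ZMod d) * (p : ℂ) ^ (-z))) s₀ = 1 :=
  finite_euler_product_nonzero_zeros_simple_general q d χ s₀ hs₀ hzero
end

section
/- Let f be an entire function, s₀ a complex number, r > 0 and M > 1 real, and suppose f(s₀) ≠ 0 and |f(s)/f(s₀)| < e^M for all s with |s - s₀| ≤ r. Then for every s with |s - s₀| ≤ r/4 where f(s) ≠ 0, |f'(s)/f(s) - Σ_{ρ : |ρ - s₀| ≤ r/2, f(ρ)=0} 1/(s - ρ)| ≤ C M / r for some absolute constant C, where zeros ρ are counted with multiplicity. -/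
/-!
Dividing out the zeros in the half disk writes `f = P * g` with `P z = ∏ (z - ρ) ^ m ρ` and `g`
entire and zero-free on `‖z - s₀‖ ≤ r / 2`. On the circle `‖z - s₀‖ = r` every factor of `P` is
at least as large as at `s₀`, so the maximum principle gives `‖g z‖ ≤ e^M ‖g s₀‖` on the disk.
A holomorphic logarithm `L` of `g / g s₀` on the half disk thus has `L s₀ = 0` and `re L ≤ M`;
Borel–Carathéodory bounds `‖L‖ ≤ 6M` on a smaller disk, and Cauchy's estimate bounds
`L' = g' / g` by `48 M / r` on `‖z - s₀‖ ≤ r / 4`. Finally `f' / f = ∑ m ρ / (z - ρ) + g' / g`.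
-/

open Metric Set Topology

section ZeroProd

variable {Z : Finset ℂ} {m : ℂ → ℕ} {z : ℂ}

def zeroProd (Z : Finset ℂ) (m : ℂ → ℕ) (z : ℂ) : ℂ := ∏ ρ ∈ Z, (z - ρ) ^ m ρ

lemma differentiable_zeroProd : Differentiable ℂ (zeroProd Z m) := by
  unfold zeroProd; fun_prop

lemma zeroProd_ne_zero (hz : z ∉ Z) : zeroProd Z m z ≠ 0 :=
  Finset.prod_ne_zero_iff.2 fun _ hρ => pow_ne_zero _ (sub_ne_zero.2 fun h => hz (h ▸ hρ))

lemma zeroProd_eq_pow_mul_erase {ρ : ℂ} (hρ : ρ ∈ Z) (z : ℂ) :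
    zeroProd Z m z = (z - ρ) ^ m ρ * zeroProd (Z.erase ρ) m z :=
  (Finset.mul_prod_erase Z (fun ρ => (z - ρ) ^ m ρ) hρ).symm

lemma logDeriv_zeroProd (hz : z ∉ Z) :
    logDeriv (zeroProd Z m) z = ∑ ρ ∈ Z, (m ρ : ℂ) / (z - ρ) := by
  have hne : ∀ ρ ∈ Z, z - ρ ≠ 0 := fun _ hρ => sub_ne_zero.2 fun h => hz (h ▸ hρ)
  unfold zeroProd
  rw [logDeriv_prod (f := fun ρ z => (z - ρ) ^ m ρ) (fun ρ hρ => pow_ne_zero _ (hne ρ hρ))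
    (fun ρ _ => by fun_prop)]
  refine Finset.sum_congr rfl fun ρ _ => ?_
  rw [logDeriv_fun_pow (by fun_prop), logDeriv_apply, deriv_sub_const, deriv_id'', mul_one_div]

lemma norm_zeroProd_le {c w : ℂ} (h : ∀ ρ ∈ Z, ‖c - ρ‖ ≤ ‖w - ρ‖) :
    ‖zeroProd Z m c‖ ≤ ‖zeroProd Z m w‖ := by
  simp only [zeroProd, norm_prod, norm_pow]
  exact Finset.prod_le_prod (fun _ _ => by positivity)
    fun ρ hρ => pow_le_pow_left₀ (norm_nonneg _) (h ρ hρ) _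

end ZeroProd

section DivZeroProd

variable {f : ℂ → ℂ} {Z : Finset ℂ} {m : ℂ → ℕ} {h : ℂ → ℂ → ℂ} {z : ℂ}

/-- `f / zeroProd Z m`, with the removable singularities at `Z` filled in from factorisations
`f z = (z - ρ) ^ m ρ * h ρ z`. -/
noncomputable def divZeroProd (f : ℂ → ℂ) (Z : Finset ℂ) (m : ℂ → ℕ) (h : ℂ → ℂ → ℂ) (z : ℂ) :
    ℂ :=
  if z ∈ Z then h z z / zeroProd (Z.erase z) m z else f z / zeroProd Z m z

lemma eq_zeroProd_mul_divZeroProd (hfh : ∀ ρ ∈ Z, ∀ z, f z = (z - ρ) ^ m ρ * h ρ z) (z : ℂ) :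
    f z = zeroProd Z m z * divZeroProd f Z m h z := by
  by_cases hz : z ∈ Z
  · rw [divZeroProd, if_pos hz, zeroProd_eq_pow_mul_erase hz, hfh z hz z, mul_assoc,
      mul_div_cancel₀ _ (zeroProd_ne_zero (Z.notMem_erase z))]
  · rw [divZeroProd, if_neg hz, mul_div_cancel₀ _ (zeroProd_ne_zero hz)]

lemma divZeroProd_eventuallyEq (hfh : ∀ ρ ∈ Z, ∀ z, f z = (z - ρ) ^ m ρ * h ρ z) {ρ : ℂ}
    (hρ : ρ ∈ Z) : divZeroProd f Z m h =ᶠ[𝓝 ρ] fun z => h ρ z / zeroProd (Z.erase ρ) m z := by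
  filter_upwards [(Z.erase ρ).finite_toSet.isClosed.isOpen_compl.mem_nhds (by simp)] with z hz
  by_cases hzρ : z = ρ
  · simp [divZeroProd, hzρ, hρ]
  · have hzZ : z ∉ Z := fun h => hz (Finset.mem_erase.2 ⟨hzρ, h⟩)
    rw [divZeroProd, if_neg hzZ, hfh ρ hρ z, zeroProd_eq_pow_mul_erase hρ,
      mul_div_mul_left _ _ (pow_ne_zero _ (sub_ne_zero.2 hzρ))]

lemma differentiable_divZeroProd (hf : Differentiable ℂ f)
    (hfh : ∀ ρ ∈ Z, ∀ z, f z = (z - ρ) ^ m ρ * h ρ z)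
    (hh : ∀ ρ ∈ Z, DifferentiableAt ℂ (h ρ) ρ) : Differentiable ℂ (divZeroProd f Z m h) := by
  intro z
  by_cases hz : z ∈ Z
  · exact ((hh z hz).div differentiable_zeroProd.differentiableAt
      (zeroProd_ne_zero (Z.notMem_erase z))).congr_of_eventuallyEq
      (divZeroProd_eventuallyEq hfh hz)
  · refine ((hf z).div differentiable_zeroProd.differentiableAt
      (zeroProd_ne_zero (m := m) hz)).congr_of_eventuallyEq ?_
    filter_upwards [Z.finite_toSet.isClosed.isOpen_compl.mem_nhds hz] with w hw
    simp_all [divZeroProd]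

lemma divZeroProd_ne_zero (hh : ∀ ρ ∈ Z, h ρ ρ ≠ 0) (hf : z ∉ Z → f z ≠ 0) :
    divZeroProd f Z m h z ≠ 0 := by
  by_cases hz : z ∈ Z
  · rw [divZeroProd, if_pos hz]
    exact div_ne_zero (hh z hz) (zeroProd_ne_zero (Z.notMem_erase z))
  · rw [divZeroProd, if_neg hz]
    exact div_ne_zero (hf hz) (zeroProd_ne_zero hz)

end DivZeroProd

lemma norm_le_of_eq_zeroProd_mul {f g : ℂ → ℂ} {Z : Finset ℂ} {m : ℂ → ℕ} {c z : ℂ} {r B : ℝ}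
    (hr : 0 < r) (hg : Differentiable ℂ g) (hfg : ∀ w, f w = zeroProd Z m w * g w)
    (hZ : ∀ ρ ∈ Z, ‖ρ - c‖ ≤ r / 2) (hc : c ∉ Z) (hf : ∀ w ∈ sphere c r, ‖f w‖ ≤ B * ‖f c‖)
    (hz : z ∈ closedBall c r) : ‖g z‖ ≤ B * ‖g c‖ := by
  rw [← closure_ball c hr.ne'] at hz
  refine Complex.norm_le_of_forall_mem_frontier_norm_le isBounded_ball hg.diffContOnCl ?_ hz
  rw [frontier_ball c hr.ne']
  intro w hw
  have hP : ‖zeroProd Z m c‖ ≤ ‖zeroProd Z m w‖ := norm_zeroProd_le fun ρ hρ => by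
    have htri := norm_sub_le_norm_sub_add_norm_sub w ρ c
    rw [mem_sphere_iff_norm.1 hw] at htri
    rw [norm_sub_rev c ρ]
    linarith [hZ ρ hρ]
  have hPc : 0 < ‖zeroProd Z m c‖ := norm_pos_iff.2 (zeroProd_ne_zero hc)
  have hfw := hf w hw
  rw [hfg, hfg, norm_mul, norm_mul] at hfw
  have hB : 0 ≤ B * ‖g c‖ := by nlinarith [norm_nonneg (zeroProd Z m w), norm_nonneg (g w)]
  nlinarith

section LogDerivBound

variable {g L : ℂ → ℂ} {c z : ℂ} {R M : ℝ}

lemma exists_primitive_logDeriv_eq_mul_exp (hR : 0 < R) (hg : DifferentiableOn ℂ g (ball c R))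
    (hg0 : ∀ w ∈ ball c R, g w ≠ 0) :
    ∃ L : ℂ → ℂ, L c = 0 ∧ (∀ w ∈ ball c R, HasDerivAt L (logDeriv g w) w) ∧
      ∀ w ∈ ball c R, g w = g c * Complex.exp (L w) := by
  obtain ⟨L, hL0, hL⟩ :=
    ((hg.deriv isOpen_ball).div hg hg0).isExactOn_ball.with_val_at c (0 : ℂ)
  have hLd : DifferentiableOn ℂ L (ball c R) := fun w hw =>
    (hL w hw).differentiableAt.differentiableWithinAt
  have hlog : EqOn (logDeriv g) (logDeriv (Complex.exp ∘ L)) (ball c R) := fun w hw => by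
    rw [logDeriv_comp Complex.differentiableAt_exp (hL w hw).differentiableAt,
      Complex.logDeriv_exp, Pi.one_apply, one_mul, (hL w hw).deriv, logDeriv_apply, Pi.div_apply]
  obtain ⟨a, -, ha⟩ := (logDeriv_eqOn_iff hg (Complex.differentiable_exp.comp_differentiableOn hLd)
    isOpen_ball (convex_ball c R).isPreconnected (fun w _ => Complex.exp_ne_zero _) hg0).1 hlog
  have hac : g c = a := by simpa [hL0] using ha (mem_ball_self hR)
  exact ⟨L, hL0, hL, fun w hw => by simpa [hac] using ha hw⟩

lemma borelCaratheodory_zero_ball (hM : 0 < M) (hL : DifferentiableOn ℂ L (ball c R))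
    (hre : ∀ w ∈ ball c R, (L w).re ≤ M) (hc : L c = 0) (hz : z ∈ ball c R) :
    ‖L z‖ ≤ 2 * M * ‖z - c‖ / (R - ‖z - c‖) := by
  have hshift : MapsTo (· + c) (ball 0 R) (ball c R) := fun w hw => by
    simpa [mem_ball_iff_norm] using hw
  simpa using Complex.borelCaratheodory_zero (f := fun w => L (w + c)) (z := z - c) hM
    (hL.comp (by fun_prop) hshift) (fun w hw => hre _ (hshift hw)) (pos_of_mem_ball hz)
    (mem_ball_zero_iff.2 (mem_ball_iff_norm.1 hz)) (by simpa using hc)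

lemma norm_logDeriv_le_of_norm_le_exp_mul (hR : 0 < R) (hM : 0 < M)
    (hg : DifferentiableOn ℂ g (ball c R)) (hg0 : ∀ w ∈ ball c R, g w ≠ 0)
    (hgM : ∀ w ∈ ball c R, ‖g w‖ ≤ Real.exp M * ‖g c‖) (hz : ‖z - c‖ ≤ R / 2) :
    ‖logDeriv g z‖ ≤ 24 * M / R := by
  obtain ⟨L, hL0, hL, hgL⟩ := exists_primitive_logDeriv_eq_mul_exp hR hg hg0
  have hLd : DifferentiableOn ℂ L (ball c R) := fun w hw =>
    (hL w hw).differentiableAt.differentiableWithinAt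
  have hre : ∀ w ∈ ball c R, (L w).re ≤ M := by
    intro w hw
    have hgc : 0 < ‖g c‖ := norm_pos_iff.2 (hg0 c (mem_ball_self hR))
    have hgw := hgM w hw
    rw [hgL w hw, norm_mul, Complex.norm_exp, mul_comm] at hgw
    exact Real.exp_le_exp.1 (le_of_mul_le_mul_right hgw hgc)
  have hsub : closedBall z (R / 4) ⊆ closedBall c (3 * R / 4) := by
    refine closedBall_subset_closedBall' ?_
    rw [dist_eq_norm]; linarith
  have hsphere : ∀ w ∈ sphere z (R / 4), ‖L w‖ ≤ 6 * M := by
    intro w hw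
    have hwc : ‖w - c‖ ≤ 3 * R / 4 :=
      mem_closedBall_iff_norm.1 (hsub (sphere_subset_closedBall hw))
    calc ‖L w‖ ≤ 2 * M * ‖w - c‖ / (R - ‖w - c‖) :=
          borelCaratheodory_zero_ball hM hLd hre hL0 (mem_ball_iff_norm.2 (by linarith))
      _ ≤ 2 * M * (3 * R / 4) / (R - 3 * R / 4) := by gcongr; linarith
      _ = 6 * M := by field_simp; ring
  have hzR : closedBall z (R / 4) ⊆ ball c R :=
    hsub.trans (closedBall_subset_ball (by linarith))
  calc ‖logDeriv g z‖ = ‖deriv L z‖ := by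
        rw [(hL z (hzR (mem_closedBall_self (by positivity)))).deriv]
    _ ≤ 6 * M / (R / 4) := Complex.norm_deriv_le_of_forall_mem_sphere_norm_le (by positivity)
        (hLd.diffContOnCl_ball hzR) hsphere
    _ = 24 * M / R := by field_simp; ring

end LogDerivBound

/-- Ramachandra–Sankaranarayanan lemma (with `ε = 1/4`): there is an absolute constant `C`
such that if `f` is entire, `f(s₀) ≠ 0`, and `|f(s)/f(s₀)| < e^M` on `|s - s₀| ≤ r` with
`M > 1`, then for `|s - s₀| ≤ r/4` with `f(s) ≠ 0`,
`|f'(s)/f(s) - Σ_{|ρ - s₀| ≤ r/2, f(ρ)=0} m(ρ)/(s - ρ)| ≤ C·M/r`, where the zeros `ρ` are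
counted with their multiplicities `m(ρ)`. -/
theorem logDeriv_approx_by_zeros :
    ∃ C : ℝ, 0 < C ∧
      ∀ (f : ℂ → ℂ) (s₀ : ℂ) (r M : ℝ), Differentiable ℂ f → 0 < r → 1 < M →
        f s₀ ≠ 0 → (∀ s : ℂ, ‖s - s₀‖ ≤ r → ‖f s / f s₀‖ < Real.exp M) →
        ∀ (Z : Finset ℂ) (m : ℂ → ℕ),
          (∀ ρ : ℂ, ρ ∈ Z ↔ ‖ρ - s₀‖ ≤ r / 2 ∧ f ρ = 0) →
          (∀ ρ ∈ Z, ∃ g : ℂ → ℂ, AnalyticAt ℂ g ρ ∧ g ρ ≠ 0 ∧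
            ∀ z : ℂ, f z = (z - ρ) ^ (m ρ) * g z) →
          ∀ s : ℂ, ‖s - s₀‖ ≤ r / 4 → f s ≠ 0 →
            ‖logDeriv f s - ∑ ρ ∈ Z, (m ρ : ℂ) / (s - ρ)‖ ≤ C * M / r := by
  refine ⟨48, by norm_num, ?_⟩
  intro f s₀ r M hf hr hM hfs₀ hbound Z m hZ hfac s hs hfs
  choose! h hh_an hh_ne hh_fac using hfac
  set g := divZeroProd f Z m h
  have hfg := eq_zeroProd_mul_divZeroProd hh_fac
  have hg : Differentiable ℂ g :=
    differentiable_divZeroProd hf hh_fac fun ρ hρ => (hh_an ρ hρ).differentiableAt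
  have hg0 : ∀ z, ‖z - s₀‖ ≤ r / 2 → g z ≠ 0 := fun z hz =>
    divZeroProd_ne_zero hh_ne fun hzZ hfz => hzZ ((hZ z).2 ⟨hz, hfz⟩)
  have hf_sphere : ∀ w ∈ sphere s₀ r, ‖f w‖ ≤ Real.exp M * ‖f s₀‖ := fun w hw => by
    have := hbound w (mem_sphere_iff_norm.1 hw).le
    rw [norm_div, div_lt_iff₀ (norm_pos_iff.2 hfs₀)] at this
    exact this.le
  have hgM : ∀ z ∈ ball s₀ (r / 2), ‖g z‖ ≤ Real.exp M * ‖g s₀‖ := fun z hz =>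
    norm_le_of_eq_zeroProd_mul hr hg hfg (fun ρ hρ => ((hZ ρ).1 hρ).1)
      (fun hs₀ => hfs₀ ((hZ s₀).1 hs₀).2) hf_sphere
      (closedBall_subset_closedBall (by linarith) (ball_subset_closedBall hz))
  have hsZ : s ∉ Z := fun hsZ => hfs ((hZ s).1 hsZ).2
  have hlog : logDeriv f s = ∑ ρ ∈ Z, (m ρ : ℂ) / (s - ρ) + logDeriv g s := by
    rw [funext hfg, logDeriv_mul s (zeroProd_ne_zero hsZ) (hg0 s (by linarith))
      differentiable_zeroProd.differentiableAt (hg s), logDeriv_zeroProd hsZ]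
  rw [hlog, add_sub_cancel_left]
  calc ‖logDeriv g s‖ ≤ 24 * M / (r / 2) :=
        norm_logDeriv_le_of_norm_le_exp_mul (half_pos hr) (by linarith) hg.differentiableOn
          (fun w hw => hg0 w (mem_ball_iff_norm.1 hw).le) hgM (by linarith)
    _ = 48 * M / r := by field_simp; ring
end
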